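/- arXiv:1604.07932 — 5 statements merged into one kernel-verified Lean document; each statement's English description precedes it below -/
import Mathlib

section
/- Under inverse stereographic projection from T*R^d to T*R^{d+1}, the symplectic structure is preserved: the pullback of the canonical symplectic form Σ_k dv_k ∧ du_k on R^{d+1}×R^{d+1} under the map (X,Y) ↦ (u,v) given by u_k = 2X_k/(|X|^2+1), u_{d+1} = (|X|^2-1)/(|X|^2+1), v_k = ((|X|^2+1)/2)Y_k - <X,Y>X_k, v_{d+1} = <X,Y>, equals Σ_k dY_k ∧ dX_k. -/
/-!
Differentiate along lines `t ↦ z + t • w`: in terms of `s = |X|² + 1`, `a = ⟨X, ξ⟩` and the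
derivative `q` of `⟨X, Y⟩` in the direction `w = (ξ, η)`, the differential of the map is
`du = (2/s) ξ - (4a/s²) X`, `du_{d+1} = 4a/s²`, `dv = a Y + (s/2) η - q X - ⟨X, Y⟩ ξ`,
`dv_{d+1} = q`. Splitting off the last coordinate, the pulled-back form becomes a rational
expression in finitely many inner products, in which everything except `Σ dY_k ∧ dX_k` cancels.
-/

open Finset

/-- Inverse stereographic projection as a map `T*ℝ^d → T*ℝ^{d+1}`,
`(X, Y) ↦ (u, v)`. -/
noncomputable def invSter (d : ℕ) :
    ((Fin d → ℝ) × (Fin d → ℝ)) → ((Fin (d + 1) → ℝ) × (Fin (d + 1) → ℝ)) :=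
  fun z =>
    (Fin.snoc (fun k => 2 * z.1 k / (∑ i, z.1 i ^ 2 + 1))
        ((∑ i, z.1 i ^ 2 - 1) / (∑ i, z.1 i ^ 2 + 1)),
     Fin.snoc (fun k => ((∑ i, z.1 i ^ 2 + 1) / 2) * z.2 k - (∑ i, z.1 i * z.2 i) * z.1 k)
        (∑ i, z.1 i * z.2 i))

section Calculus

variable {𝕜 E F : Type*} [NontriviallyNormedField 𝕜] [NormedAddCommGroup E] [NormedSpace 𝕜 E]
  [NormedAddCommGroup F] [NormedSpace 𝕜 F]

theorem DifferentiableAt.finSnoc {n : ℕ} {f : E → Fin n → F} {g : E → F} {x : E}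
    (hf : DifferentiableAt 𝕜 f x) (hg : DifferentiableAt 𝕜 g x) :
    DifferentiableAt 𝕜 (fun y => (Fin.snoc (f y) (g y) : Fin (n + 1) → F)) x := by
  refine differentiableAt_pi.2 fun j => Fin.lastCases ?_ (fun k => ?_) j
  · simpa only [Fin.snoc_last] using hg
  · simpa only [Fin.snoc_castSucc] using differentiableAt_pi.1 hf k

theorem HasDerivAt.finSnoc {n : ℕ} {f : 𝕜 → Fin n → F} {g : 𝕜 → F} {f' : Fin n → F} {g' : F}
    {t : 𝕜} (hf : HasDerivAt f f' t) (hg : HasDerivAt g g' t) :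
    HasDerivAt (fun s => (Fin.snoc (f s) (g s) : Fin (n + 1) → F)) (Fin.snoc f' g') t := by
  refine hasDerivAt_pi.2 fun j => Fin.lastCases ?_ (fun k => ?_) j
  · simpa only [Fin.snoc_last] using hg
  · simpa only [Fin.snoc_castSucc] using hasDerivAt_pi.1 hf k

theorem HasDerivAt.dotProduct {ι : Type*} [Fintype ι] {f g : 𝕜 → ι → 𝕜} {f' g' : ι → 𝕜} {t : 𝕜}
    (hf : HasDerivAt f f' t) (hg : HasDerivAt g g' t) :
    HasDerivAt (fun s => f s ⬝ᵥ g s) (f' ⬝ᵥ g t + f t ⬝ᵥ g') t := by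
  simp only [_root_.dotProduct, ← Finset.sum_add_distrib]
  exact HasDerivAt.fun_sum fun i _ => (hasDerivAt_pi.1 hf i).mul (hasDerivAt_pi.1 hg i)

theorem DifferentiableAt.fderiv_apply_eq_of_hasDerivAt {f : E → F} {x v : E} {f' : F}
    (hf : DifferentiableAt 𝕜 f x) (h : HasDerivAt (fun t : 𝕜 => f (x + t • v)) f' 0) :
    fderiv 𝕜 f x v = f' :=
  (hf.hasFDerivAt.hasLineDerivAt v).unique h

end Calculus

theorem dotProduct_self_add_one_ne_zero {R ι : Type*} [Field R] [LinearOrder R]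
    [IsStrictOrderedRing R] [Fintype ι] (v : ι → R) : v ⬝ᵥ v + 1 ≠ 0 := by
  have : 0 ≤ v ⬝ᵥ v := Finset.sum_nonneg fun i _ => mul_self_nonneg (v i)
  positivity

/-- `Σ_k dY_k ∧ dX_k` evaluated on `w = (dX, dY)` and `w'`. -/
def canonicalSymplecticForm {R ι : Type*} [CommRing R] [Fintype ι] (w w' : (ι → R) × (ι → R)) :
    R :=
  ∑ k, (w.2 k * w'.1 k - w'.2 k * w.1 k)

section SymplecticForm

variable {R : Type*} [CommRing R]

theorem canonicalSymplecticForm_eq_dotProduct {ι : Type*} [Fintype ι] (w w' : (ι → R) × (ι → R)) :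
    canonicalSymplecticForm w w' = w.2 ⬝ᵥ w'.1 - w'.2 ⬝ᵥ w.1 := by
  simp only [canonicalSymplecticForm, _root_.dotProduct, sum_sub_distrib]

theorem canonicalSymplecticForm_snoc {n : ℕ} (u v u' v' : Fin n → R) (a b a' b' : R) :
    canonicalSymplecticForm (Fin.snoc u a, Fin.snoc v b) (Fin.snoc u' a', Fin.snoc v' b')
      = canonicalSymplecticForm (u, v) (u', v') + (b * a' - b' * a) := by
  simp only [canonicalSymplecticForm, Fin.sum_univ_castSucc, Fin.snoc_castSucc, Fin.snoc_last]

end SymplecticForm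

section InvSter

variable {d : ℕ}

theorem invSter_apply (z : (Fin d → ℝ) × (Fin d → ℝ)) :
    invSter d z =
      (Fin.snoc ((2 / (z.1 ⬝ᵥ z.1 + 1)) • z.1) ((z.1 ⬝ᵥ z.1 - 1) / (z.1 ⬝ᵥ z.1 + 1)),
       Fin.snoc (((z.1 ⬝ᵥ z.1 + 1) / 2) • z.2 - (z.1 ⬝ᵥ z.2) • z.1) (z.1 ⬝ᵥ z.2)) := by
  simp only [invSter, _root_.dotProduct, sq]
  congr 2
  ext k
  simp only [Pi.smul_apply, smul_eq_mul]
  ring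

theorem differentiableAt_invSter (z : (Fin d → ℝ) × (Fin d → ℝ)) :
    DifferentiableAt ℝ (invSter d) z :=
  (DifferentiableAt.finSnoc (by fun_prop (disch := positivity))
      (by fun_prop (disch := positivity))).prodMk
    (DifferentiableAt.finSnoc (by fun_prop) (by fun_prop))

noncomputable def invSterDeriv (z w : (Fin d → ℝ) × (Fin d → ℝ)) :
    (Fin (d + 1) → ℝ) × (Fin (d + 1) → ℝ) :=
  let s := z.1 ⬝ᵥ z.1 + 1
  let a := z.1 ⬝ᵥ w.1
  let q := w.1 ⬝ᵥ z.2 + z.1 ⬝ᵥ w.2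
  (Fin.snoc ((2 / s) • w.1 - (4 * a / s ^ 2) • z.1) (4 * a / s ^ 2),
   Fin.snoc (a • z.2 + (s / 2) • w.2 - q • z.1 - (z.1 ⬝ᵥ z.2) • w.1) q)

theorem hasDerivAt_invSter_add_smul (z w : (Fin d → ℝ) × (Fin d → ℝ)) :
    HasDerivAt (fun t : ℝ => invSter d (z + t • w)) (invSterDeriv z w) 0 := by
  have hX : HasDerivAt (fun t : ℝ => z.1 + t • w.1) w.1 0 := by
    simpa using ((hasDerivAt_id (0 : ℝ)).smul_const w.1).const_add z.1
  have hY : HasDerivAt (fun t : ℝ => z.2 + t • w.2) w.2 0 := by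
    simpa using ((hasDerivAt_id (0 : ℝ)).smul_const w.2).const_add z.2
  have hN := hX.dotProduct hX
  have hs := hN.add_const 1
  have hp := hX.dotProduct hY
  have hs0 := dotProduct_self_add_one_ne_zero (z.1 + (0 : ℝ) • w.1)
  simp only [invSter_apply, Prod.fst_add, Prod.snd_add, Prod.smul_fst, Prod.smul_snd]
  refine (HasDerivAt.finSnoc ?_ ?_).prodMk (HasDerivAt.finSnoc ?_ ?_)
  · refine (((hasDerivAt_const (0 : ℝ) (2 : ℝ)).fun_div hs hs0).smul hX).congr_deriv ?_
    simp only [zero_smul, add_zero, dotProduct_comm w.1 z.1]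
    module
  · refine ((hN.sub_const 1).fun_div hs hs0).congr_deriv ?_
    simp only [zero_smul, add_zero, dotProduct_comm w.1 z.1]
    ring
  · refine (((hs.div_const 2).smul hY).sub (hp.smul hX)).congr_deriv ?_
    simp only [zero_smul, add_zero, dotProduct_comm w.1 z.1]
    module
  · refine hp.congr_deriv ?_
    simp only [zero_smul, add_zero]

theorem fderiv_invSter_apply (z w : (Fin d → ℝ) × (Fin d → ℝ)) :
    fderiv ℝ (invSter d) z w = invSterDeriv z w :=
  (differentiableAt_invSter z).fderiv_apply_eq_of_hasDerivAt (hasDerivAt_invSter_add_smul z w)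

theorem canonicalSymplecticForm_invSterDeriv (z w w' : (Fin d → ℝ) × (Fin d → ℝ)) :
    canonicalSymplecticForm (invSterDeriv z w) (invSterDeriv z w')
      = canonicalSymplecticForm w w' := by
  have hs := dotProduct_self_add_one_ne_zero z.1
  simp only [invSterDeriv, canonicalSymplecticForm_snoc]
  simp only [canonicalSymplecticForm_eq_dotProduct, add_dotProduct, dotProduct_sub,
    sub_dotProduct, dotProduct_smul, smul_dotProduct, smul_eq_mul]
  rw [dotProduct_comm z.2 w.1, dotProduct_comm z.2 w'.1, dotProduct_comm z.2 z.1,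
    dotProduct_comm w.2 z.1, dotProduct_comm w'.2 z.1, dotProduct_comm w'.1 w.1,
    dotProduct_comm w.1 z.1, dotProduct_comm w'.1 z.1]
  field_simp
  ring

end InvSter

/-- The pullback of the canonical symplectic form `Σ dv_k ∧ du_k` under the
inverse stereographic projection equals `Σ dY_k ∧ dX_k`: evaluated on any two
tangent vectors `w, w'` at any point `z`, the two bilinear forms agree. -/
theorem stmt2 (d : ℕ) (z w w' : (Fin d → ℝ) × (Fin d → ℝ)) :
    (∑ k, ((fderiv ℝ (invSter d) z w).2 k * (fderiv ℝ (invSter d) z w').1 k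
        - (fderiv ℝ (invSter d) z w').2 k * (fderiv ℝ (invSter d) z w).1 k))
      = ∑ k, (w.2 k * w'.1 k - w'.2 k * w.1 k) := by
  change canonicalSymplecticForm (fderiv ℝ (invSter d) z w) (fderiv ℝ (invSter d) z w')
    = canonicalSymplecticForm w w'
  rw [fderiv_invSter_apply, fderiv_invSter_apply, canonicalSymplecticForm_invSterDeriv]
end

section
/- The Moser Hamiltonian identity: under the stereographic substitution u_j = 2ψ_j/(ψ²+1), u_{d+1} = (ψ²-1)/(ψ²+1), v_j = ((ψ²+1)/2)φ_j - <ψ,φ>ψ_j, v_{d+1} = <ψ,φ>, the geodesic Hamiltonian satisfies (1/2)|v|² = (ψ²+1)² φ² / 8, where ψ² = <ψ,ψ> and φ² = <φ,φ> and |v|² includes all d+1 components. -/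
open Finset

/-- The Moser Hamiltonian identity: under the stereographic substitution,
the geodesic Hamiltonian satisfies `(1/2)|v|² = (ψ²+1)² φ² / 8`. -/
theorem stmt6 (d : ℕ) (ψ φ : Fin d → ℝ) (v : Fin (d + 1) → ℝ)
    (hv : ∀ k : Fin d,
      v k.castSucc = ((∑ i, ψ i ^ 2 + 1) / 2) * φ k - (∑ i, ψ i * φ i) * ψ k)
    (hvl : v (Fin.last d) = ∑ i, ψ i * φ i) :
    (1 / 2) * ∑ i, v i ^ 2
      = (∑ i, ψ i ^ 2 + 1) ^ 2 * (∑ i, φ i ^ 2) / 8 := by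
  set A := ∑ i, ψ i ^ 2 with hA
  set B := ∑ i, ψ i * φ i with hB
  set C := ∑ i, φ i ^ 2 with hC
  rw [Fin.sum_univ_castSucc]
  have h1 : ∑ k : Fin d, v k.castSucc ^ 2 = ((A + 1) / 2) ^ 2 * C - (A + 1) * B * B + B ^ 2 * A := by
    have : ∀ k : Fin d, v k.castSucc ^ 2
        = ((A + 1) / 2) ^ 2 * φ k ^ 2 - (A + 1) * B * (ψ k * φ k) + B ^ 2 * ψ k ^ 2 := by
      intro k; rw [hv k]; ring
    rw [Finset.sum_congr rfl fun k _ => this k]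
    rw [Finset.sum_add_distrib, Finset.sum_sub_distrib, ← Finset.mul_sum, ← Finset.mul_sum,
      ← Finset.mul_sum, ← hB, ← hC, ← hA]
  rw [h1, hvl]
  ring
end

section
/- The Ligon-Schaaf vectors A = (q/|q| - (1/μ)<q,p> p, (1/ν)<q,p>) and B = ((1/ν)|q| p, (1/μ)<p,p>|q| - 1) in R^4, built from (q,p) in R³ with H(q,p) = <p,p>/(2μ) - 1/|q| < 0 and ν = √(μ/(-2H)), satisfy <A,A> = <B,B> (both equal) and <A,B> = 0. -/
open Finset

/-! Write `r = |q|`, `T = ⟨q,p⟩`, `P = ⟨p,p⟩`. Negative energy with `ν = √(μ / (-2H))` is the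
relation `ν² (2μ - P r) = μ² r`, i.e. `1/ν² = 2/(μ r) - P/μ²`. Expanding, `|A|² - 1` and
`|B|² - 1` are multiples of this relation, while `⟨A,B⟩ = 0` holds identically. -/

section SnocSums

variable {R : Type*} [CommSemiring R] {n : ℕ}

theorem sum_snoc_mul_snoc (u v : Fin n → R) (a b : R) :
    ∑ i, (Fin.snoc u a : Fin (n + 1) → R) i * (Fin.snoc v b : Fin (n + 1) → R) i =
      ∑ i, u i * v i + a * b := by
  simp only [Fin.sum_univ_castSucc, Fin.snoc_castSucc, Fin.snoc_last]

theorem sum_snoc_sq (u : Fin n → R) (a : R) :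
    ∑ i, (Fin.snoc u a : Fin (n + 1) → R) i ^ 2 = ∑ i, u i ^ 2 + a ^ 2 := by
  simp only [Fin.sum_univ_castSucc, Fin.snoc_castSucc, Fin.snoc_last]

end SnocSums

section Expansions

variable {n : ℕ} (q p : Fin n → ℝ)

theorem sum_div_sub_mul_sq (r c : ℝ) :
    ∑ i, (q i / r - c * p i) ^ 2 =
      (∑ i, q i ^ 2) / r ^ 2 - 2 * c * (∑ i, q i * p i) / r + c ^ 2 * ∑ i, p i ^ 2 := by
  calc ∑ i, (q i / r - c * p i) ^ 2
      = ∑ i, ((r ^ 2)⁻¹ * q i ^ 2 - (2 * c / r) * (q i * p i) + c ^ 2 * p i ^ 2) :=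
        sum_congr rfl fun i _ => by ring
    _ = _ := by simp only [sum_add_distrib, sum_sub_distrib, ← mul_sum]; ring

theorem sum_div_sub_mul_mul (r c d : ℝ) :
    ∑ i, (q i / r - c * p i) * (d * p i) =
      d * (∑ i, q i * p i) / r - c * d * ∑ i, p i ^ 2 := by
  calc ∑ i, (q i / r - c * p i) * (d * p i)
      = ∑ i, (d / r * (q i * p i) - c * d * p i ^ 2) :=
        sum_congr rfl fun i _ => by ring
    _ = _ := by simp only [sum_sub_distrib, ← mul_sum]; ring

theorem sum_mul_sq (c : ℝ) : ∑ i, (c * p i) ^ 2 = c ^ 2 * ∑ i, p i ^ 2 := by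
  simp only [mul_pow, mul_sum]

end Expansions

theorem sq_mul_sub_eq_of_energy_neg {μ H ν P r : ℝ} (hμ : 0 < μ) (hr : 0 < r)
    (hH : H = P / (2 * μ) - 1 / r) (hHneg : H < 0) (hν : ν = √(μ / (-2 * H))) :
    ν ^ 2 * (2 * μ - P * r) = μ ^ 2 * r := by
  have hpos : 0 < μ / (-2 * H) := div_pos hμ (by linarith)
  have hrel : 2 * μ - P * r = -2 * H * (μ * r) := by
    rw [hH]; field_simp; ring
  rw [hν, Real.sq_sqrt hpos.le, hrel]
  field_simp [hHneg.ne]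

section LigonSchaaf

variable {n : ℕ} (q p : Fin n → ℝ) {μ ν r : ℝ}

theorem ligonSchaaf_nu_ne_zero (hr : r ≠ 0) (hμ : μ ≠ 0)
    (henergy : ν ^ 2 * (2 * μ - (∑ i, p i ^ 2) * r) = μ ^ 2 * r) : ν ≠ 0 := by
  rintro rfl
  simp_all

theorem ligonSchaaf_A_sq (hr : r ≠ 0) (hq : ∑ i, q i ^ 2 = r ^ 2) (hμ : μ ≠ 0)
    (henergy : ν ^ 2 * (2 * μ - (∑ i, p i ^ 2) * r) = μ ^ 2 * r) :
    ∑ i, (Fin.snoc (fun i => q i / r - (1 / μ) * (∑ j, q j * p j) * p i)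
      ((1 / ν) * ∑ j, q j * p j) : Fin (n + 1) → ℝ) i ^ 2 = 1 := by
  have hν := ligonSchaaf_nu_ne_zero p hr hμ henergy
  rw [sum_snoc_sq, sum_div_sub_mul_sq, hq]
  field_simp
  linear_combination -(∑ j, q j * p j) ^ 2 * henergy

theorem ligonSchaaf_B_sq (hr : r ≠ 0) (hμ : μ ≠ 0)
    (henergy : ν ^ 2 * (2 * μ - (∑ i, p i ^ 2) * r) = μ ^ 2 * r) :
    ∑ i, (Fin.snoc (fun i => (1 / ν) * r * p i)
      ((1 / μ) * (∑ j, p j ^ 2) * r - 1) : Fin (n + 1) → ℝ) i ^ 2 = 1 := by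
  have hν := ligonSchaaf_nu_ne_zero p hr hμ henergy
  rw [sum_snoc_sq, sum_mul_sq]
  field_simp
  linear_combination -(∑ j, p j ^ 2) * r * henergy

theorem ligonSchaaf_A_mul_B (hr : r ≠ 0) :
    ∑ i, (Fin.snoc (fun i => q i / r - (1 / μ) * (∑ j, q j * p j) * p i)
        ((1 / ν) * ∑ j, q j * p j) : Fin (n + 1) → ℝ) i *
      (Fin.snoc (fun i => (1 / ν) * r * p i)
        ((1 / μ) * (∑ j, p j ^ 2) * r - 1) : Fin (n + 1) → ℝ) i = 0 := by
  rw [sum_snoc_mul_snoc, sum_div_sub_mul_mul]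
  field_simp
  ring

end LigonSchaaf

/-- The Ligon-Schaaf vectors `A = (q/|q| - (1/μ)⟨q,p⟩p, (1/ν)⟨q,p⟩)` and
`B = ((1/ν)|q|p, (1/μ)⟨p,p⟩|q| - 1)` in `ℝ⁴` satisfy `⟨A,A⟩ = ⟨B,B⟩` and
`⟨A,B⟩ = 0`. -/
theorem stmt11 (q p : Fin 3 → ℝ) (hq : q ≠ 0) (μ H ν : ℝ) (hμ : 0 < μ)
    (hH : H = (∑ i, p i ^ 2) / (2 * μ) - 1 / Real.sqrt (∑ i, q i ^ 2))
    (hHneg : H < 0)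
    (hν : ν = Real.sqrt (μ / (-2 * H)))
    (A B : Fin 4 → ℝ)
    (hA : A = Fin.snoc
      (fun i : Fin 3 => q i / Real.sqrt (∑ j, q j ^ 2) - (1 / μ) * (∑ j, q j * p j) * p i)
      ((1 / ν) * ∑ j, q j * p j))
    (hB : B = Fin.snoc
      (fun i : Fin 3 => (1 / ν) * Real.sqrt (∑ j, q j ^ 2) * p i)
      ((1 / μ) * (∑ j, p j ^ 2) * Real.sqrt (∑ j, q j ^ 2) - 1)) :
    (∑ i, A i ^ 2 = ∑ i, B i ^ 2) ∧ (∑ i, A i * B i = 0) := by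
  have hS : 0 < ∑ i, q i ^ 2 := by
    obtain ⟨i, hi⟩ := Function.ne_iff.mp hq
    exact sum_pos' (fun j _ => sq_nonneg (q j)) ⟨i, mem_univ i, pow_two_pos_of_ne_zero hi⟩
  have hr : 0 < √(∑ i, q i ^ 2) := Real.sqrt_pos.mpr hS
  have hqr : ∑ i, q i ^ 2 = √(∑ i, q i ^ 2) ^ 2 := (Real.sq_sqrt hS.le).symm
  have henergy := sq_mul_sub_eq_of_energy_neg hμ hr hH hHneg hν
  subst hA hB
  exact ⟨(ligonSchaaf_A_sq q p hr.ne' hqr hμ.ne' henergy).trans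
      (ligonSchaaf_B_sq p hr.ne' hμ.ne' henergy).symm,
    ligonSchaaf_A_mul_B q p hr.ne'⟩
end

section
/- The Ligon-Schaaf map preserves angular momentum: with A, B as above and (x,y) = (A sinθ + B cosθ, -ν A cosθ + ν B sinθ) for any θ, the spatial parts satisfy x̃ × ỹ = q × p, where x̃, ỹ in R³ are the first three components of x, y. -/
open Finset Matrix

/-!
Write `Ã = |q|⁻¹ q - c p` and `B̃ = ν⁻¹ |q| p`. Since `p × p = 0`, `Ã × B̃ = ν⁻¹ (q × p)`.
The cross product is alternating, so passing from `(Ã, B̃)` to the combinations `(x̃, ỹ)`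
multiplies `Ã × B̃` by their determinant `sin θ · ν sin θ + cos θ · ν cos θ = ν`.
-/

theorem smul_add_smul_cross_smul_add_smul {R : Type*} [CommRing R] (a b c d : R)
    (u v : Fin 3 → R) :
    (a • u + b • v) ⨯₃ (c • u + d • v) = (a * d - b * c) • (u ⨯₃ v) := by
  simp only [map_add, map_smul, LinearMap.add_apply, LinearMap.smul_apply, cross_self,
    smul_zero, ← cross_anticomm v u]
  module

/-- Also true for `q = 0`, where the inverse is `0`. -/
theorem inv_sqrt_sum_sq_mul_smul {n : ℕ} (q : Fin n → ℝ) :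
    ((√(∑ j, q j ^ 2))⁻¹ * √(∑ j, q j ^ 2)) • q = q := by
  by_cases hr : √(∑ j, q j ^ 2) = 0
  · have hsum : ∑ j, q j ^ 2 = 0 :=
      le_antisymm (Real.sqrt_eq_zero'.mp hr) (by positivity)
    have hq : q = 0 := funext fun i =>
      pow_eq_zero_iff two_ne_zero |>.mp <|
        (Finset.sum_eq_zero_iff_of_nonneg fun j _ => sq_nonneg (q j)).mp hsum i (mem_univ i)
    rw [hq, smul_zero]
  · rw [inv_mul_cancel₀ hr, one_smul]

theorem ligonSchaaf_cross (q p : Fin 3 → ℝ) (c ν : ℝ) :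
    ((√(∑ j, q j ^ 2))⁻¹ • q - c • p) ⨯₃ ((ν⁻¹ * √(∑ j, q j ^ 2)) • p) =
      ν⁻¹ • (q ⨯₃ p) := by
  conv_rhs => rw [← inv_sqrt_sum_sq_mul_smul q]
  simp only [map_sub, map_smul, LinearMap.sub_apply, LinearMap.smul_apply, cross_self,
    smul_zero, sub_zero, smul_smul]
  ring_nf

theorem stmt12_general (q p : Fin 3 → ℝ) (μ H ν θ : ℝ) (hμ : 0 < μ)
    (hHneg : H < 0)
    (hν : ν = Real.sqrt (μ / (-2 * H)))
    (At Bt : Fin 3 → ℝ)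
    (hAt : At = fun i => q i / Real.sqrt (∑ j, q j ^ 2) - (1 / μ) * (∑ j, q j * p j) * p i)
    (hBt : Bt = fun i => (1 / ν) * Real.sqrt (∑ j, q j ^ 2) * p i)
    (xt yt : Fin 3 → ℝ)
    (hxt : xt = Real.sin θ • At + Real.cos θ • Bt)
    (hyt : yt = -(ν * Real.cos θ) • At + (ν * Real.sin θ) • Bt) :
    xt ⨯₃ yt = q ⨯₃ p := by
  have hν0 : ν ≠ 0 := by
    rw [hν]
    exact (Real.sqrt_pos.mpr (div_pos hμ (by linarith))).ne'
  have hAt' : At = (√(∑ j, q j ^ 2))⁻¹ • q - ((1 / μ) * ∑ j, q j * p j) • p := by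
    funext i
    simp [hAt, div_eq_inv_mul, mul_assoc]
  have hBt' : Bt = (ν⁻¹ * √(∑ j, q j ^ 2)) • p := by
    funext i
    simp [hBt]
  have hdet : Real.sin θ * (ν * Real.sin θ) - Real.cos θ * -(ν * Real.cos θ) = ν := by
    linear_combination ν * Real.sin_sq_add_cos_sq θ
  rw [hxt, hyt, smul_add_smul_cross_smul_add_smul, hdet, hAt', hBt', ligonSchaaf_cross,
    smul_smul, mul_inv_cancel₀ hν0, one_smul]

/-- The Ligon-Schaaf map preserves angular momentum: the spatial parts of
`x = A sinθ + B cosθ`, `y = -νA cosθ + νB sinθ` satisfy `x̃ × ỹ = q × p`. -/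
theorem stmt12 (q p : Fin 3 → ℝ) (hq : q ≠ 0) (μ H ν θ : ℝ) (hμ : 0 < μ)
    (hH : H = (∑ i, p i ^ 2) / (2 * μ) - 1 / Real.sqrt (∑ i, q i ^ 2))
    (hHneg : H < 0)
    (hν : ν = Real.sqrt (μ / (-2 * H)))
    (At Bt : Fin 3 → ℝ) (A₄ B₄ : ℝ)
    (hAt : At = fun i => q i / Real.sqrt (∑ j, q j ^ 2) - (1 / μ) * (∑ j, q j * p j) * p i)
    (hA₄ : A₄ = (1 / ν) * ∑ j, q j * p j)
    (hBt : Bt = fun i => (1 / ν) * Real.sqrt (∑ j, q j ^ 2) * p i)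
    (hB₄ : B₄ = (1 / μ) * (∑ j, p j ^ 2) * Real.sqrt (∑ j, q j ^ 2) - 1)
    (xt yt : Fin 3 → ℝ)
    (hxt : xt = Real.sin θ • At + Real.cos θ • Bt)
    (hyt : yt = -(ν * Real.cos θ) • At + (ν * Real.sin θ) • Bt) :
    xt ⨯₃ yt = q ⨯₃ p :=
  stmt12_general q p μ H ν θ hμ hHneg hν At Bt hAt hBt xt yt hxt hyt
end

section
/- The Ligon-Schaaf map transforms the Runge-Lenz vector: with notation as above, x₄ ỹ - y₄ x̃ = ν (q/|q| - (1/μ) p × (q × p)), where x = A sinθ + B cosθ and y = -ν A cosθ + ν B sinθ, x₄, y₄ are the fourth components and x̃, ỹ the spatial parts. -/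
/-!
Writing `x = sin θ • A + cos θ • B` and `y = ν • (-cos θ • A + sin θ • B)`, the combination
`x₄ • ỹ - y₄ • x̃` is `ν • (A₄ • B̃ - B₄ • Ã)` because `sin² θ + cos² θ = 1`, so `θ` drops out.
Expanding `A₄ • B̃ - B₄ • Ã` in `q` and `p`, the `q`-coefficient is already `1/|q| - |p|²/μ`; the
`p`-coefficient matches `⟨q,p⟩/μ` exactly by the energy relation `ν² (2/|q| - |p|²/μ) = μ`, and
`p × (q × p) = |p|² q - ⟨q,p⟩ p` identifies the result with the Runge-Lenz vector.
-/

open Matrix Real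

theorem smul_sub_smul_of_rotation {V : Type*} [AddCommGroup V] [Module ℝ V] (a b : V)
    (a₄ b₄ ν θ : ℝ) :
    (a₄ * sin θ + b₄ * cos θ) • (-(ν * cos θ) • a + (ν * sin θ) • b)
      - (-(ν * a₄) * cos θ + (ν * b₄) * sin θ) • (sin θ • a + cos θ • b)
      = ν • (a₄ • b - b₄ • a) := by
  linear_combination (norm := module) (sin_sq_add_cos_sq θ) • (ν • (a₄ • b - b₄ • a))

theorem runge_lenz_eq {K V : Type*} [Field K] [AddCommGroup V] [Module K V] (q p : V)
    {μ ν s P D : K} (hμ : μ ≠ 0) (hν : ν ≠ 0) (hs : s ≠ 0) (h : ν ^ 2 * (2 / s - P / μ) = μ) :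
    (D / ν) • (s / ν) • p - (P * s / μ - 1) • (s⁻¹ • q - (D / μ) • p)
      = s⁻¹ • q - μ⁻¹ • (P • q - D • p) := by
  field_simp at h
  match_scalars
  · field_simp
    linear_combination (-D) * h
  · field_simp
    ring

theorem sq_mul_eq_of_energy {μ P s H ν : ℝ} (hμ : 0 < μ) (hH : H = P / (2 * μ) - 1 / s)
    (hHneg : H < 0) (hν : ν = √(μ / (-2 * H))) (hs : s ≠ 0) : ν ^ 2 * (2 / s - P / μ) = μ := by
  have hH' : 2 / s - P / μ = -2 * H := by
    rw [hH]
    field_simp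
    ring
  rw [hH', hν, sq_sqrt (div_pos hμ (by linarith)).le, div_mul_cancel₀ _ (by linarith)]

theorem stmt13_general (q p : Fin 3 → ℝ) (μ H ν θ : ℝ) (hμ : 0 < μ)
    (hH : H = (∑ i, p i ^ 2) / (2 * μ) - 1 / Real.sqrt (∑ i, q i ^ 2))
    (hHneg : H < 0)
    (hν : ν = Real.sqrt (μ / (-2 * H)))
    (At Bt : Fin 3 → ℝ) (A₄ B₄ : ℝ)
    (hAt : At = fun i => q i / Real.sqrt (∑ j, q j ^ 2) - (1 / μ) * (∑ j, q j * p j) * p i)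
    (hA₄ : A₄ = (1 / ν) * ∑ j, q j * p j)
    (hBt : Bt = fun i => (1 / ν) * Real.sqrt (∑ j, q j ^ 2) * p i)
    (hB₄ : B₄ = (1 / μ) * (∑ j, p j ^ 2) * Real.sqrt (∑ j, q j ^ 2) - 1)
    (xt yt : Fin 3 → ℝ) (x₄ y₄ : ℝ)
    (hxt : xt = Real.sin θ • At + Real.cos θ • Bt)
    (hx₄ : x₄ = A₄ * Real.sin θ + B₄ * Real.cos θ)
    (hyt : yt = -(ν * Real.cos θ) • At + (ν * Real.sin θ) • Bt)
    (hy₄ : y₄ = -(ν * A₄) * Real.cos θ + (ν * B₄) * Real.sin θ) :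
    x₄ • yt - y₄ • xt
      = ν • ((Real.sqrt (∑ j, q j ^ 2))⁻¹ • q - μ⁻¹ • (p ⨯₃ (q ⨯₃ p))) := by
  set s := √(∑ j, q j ^ 2)
  set P := ∑ j, p j ^ 2
  set D := ∑ j, q j * p j
  have hs : s ≠ 0 := by
    intro hs0
    rw [hs0, div_zero, sub_zero] at hH
    have : 0 ≤ P / (2 * μ) := by positivity
    linarith
  have hk := sq_mul_eq_of_energy hμ hH hHneg hν hs
  have hν0 : ν ≠ 0 := by
    rintro rfl
    norm_num at hk
    linarith
  have hAt' : At = s⁻¹ • q - (D / μ) • p := by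
    rw [hAt]; ext i; simp only [Pi.sub_apply, Pi.smul_apply, smul_eq_mul]; ring
  have hBt' : Bt = (s / ν) • p := by
    rw [hBt]; ext i; simp only [Pi.smul_apply, smul_eq_mul]; ring
  have hcross : p ⨯₃ (q ⨯₃ p) = P • q - D • p := by
    rw [cross_cross_eq_smul_sub_smul']
    simp only [P, D, dotProduct, sq]
  rw [hxt, hyt, hx₄, hy₄, smul_sub_smul_of_rotation, hcross, hAt', hBt', hA₄, hB₄,
    ← runge_lenz_eq q p hμ.ne' hν0 hs hk]
  congr 3 <;> ring

/-- The Ligon-Schaaf map transforms the Runge-Lenz vector: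
`x₄ ỹ - y₄ x̃ = ν (q/|q| - (1/μ) p × (q × p))`. -/
theorem stmt13 (q p : Fin 3 → ℝ) (hq : q ≠ 0) (μ H ν θ : ℝ) (hμ : 0 < μ)
    (hH : H = (∑ i, p i ^ 2) / (2 * μ) - 1 / Real.sqrt (∑ i, q i ^ 2))
    (hHneg : H < 0)
    (hν : ν = Real.sqrt (μ / (-2 * H)))
    (At Bt : Fin 3 → ℝ) (A₄ B₄ : ℝ)
    (hAt : At = fun i => q i / Real.sqrt (∑ j, q j ^ 2) - (1 / μ) * (∑ j, q j * p j) * p i)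
    (hA₄ : A₄ = (1 / ν) * ∑ j, q j * p j)
    (hBt : Bt = fun i => (1 / ν) * Real.sqrt (∑ j, q j ^ 2) * p i)
    (hB₄ : B₄ = (1 / μ) * (∑ j, p j ^ 2) * Real.sqrt (∑ j, q j ^ 2) - 1)
    (xt yt : Fin 3 → ℝ) (x₄ y₄ : ℝ)
    (hxt : xt = Real.sin θ • At + Real.cos θ • Bt)
    (hx₄ : x₄ = A₄ * Real.sin θ + B₄ * Real.cos θ)
    (hyt : yt = -(ν * Real.cos θ) • At + (ν * Real.sin θ) • Bt)
    (hy₄ : y₄ = -(ν * A₄) * Real.cos θ + (ν * B₄) * Real.sin θ) :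
    x₄ • yt - y₄ • xt
      = ν • ((Real.sqrt (∑ j, q j ^ 2))⁻¹ • q - μ⁻¹ • (p ⨯₃ (q ⨯₃ p))) :=
  stmt13_general q p μ H ν θ hμ hH hHneg hν At Bt A₄ B₄ hAt hA₄ hBt hB₄ xt yt x₄ y₄ hxt hx₄ hyt hy₄
end
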